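/- Let $N$ be a statistical submanifold of a holomorphic statistical manifold $\overline{N}$. Then $\nabla^{\perp}_X(\mathcal{F}Y) = \mathcal{F}\,\nabla^*_X Y$ for all tangent vector fields $X, Y$ if and only if $\nabla_X(tV) = t\,\nabla^{\perp *}_X V$ for all tangent $X$ and normal $V$. -/
import Mathlib


open scoped BigOperators

/- Abstract algebraic model of the geometry of a statistical manifold:
`A` plays the role of the ring of smooth functions on the manifold `N̄`,
`V` plays the role of the module of vector fields `Γ(TN̄)`.  -/

variable (A : Type) [CommRing A] [Algebra ℝ A]
variable (V : Type) [AddCommGroup V] [Module A V] [Module ℝ V] [IsScalarTower ℝ A V]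

/-- The basic context: a (pseudo-Riemannian) metric `g`, the action `D` of vector
fields on functions as derivations, and the Lie bracket of vector fields. -/
structure StatContext where
  g : V →ₗ[A] V →ₗ[A] A
  g_symm : ∀ X Y : V, g X Y = g Y X
  g_nondeg : ∀ X : V, (∀ Y : V, g X Y = 0) → X = 0
  D : V → Derivation ℝ A A
  bracket : V → V → V

variable {A V}

/-- An affine connection. -/
structure AffConn (ctx : StatContext A V) where
  op : V → V → V
  add_left : ∀ X Y Z : V, op (X + Y) Z = op X Z + op Y Z
  smul_left : ∀ (f : A) (X Y : V), op (f • X) Y = f • op X Y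
  add_right : ∀ X Y Z : V, op X (Y + Z) = op X Y + op X Z
  leibniz : ∀ (X : V) (f : A) (Y : V), op X (f • Y) = ctx.D X f • Y + f • op X Y

/-- Torsion-freeness of a connection. -/
def IsTorsionFree (ctx : StatContext A V) (C : AffConn ctx) : Prop :=
  ∀ X Y : V, C.op X Y - C.op Y X = ctx.bracket X Y

/-- `(∇_X g)(Y, Z)`. -/
def nablaG (ctx : StatContext A V) (C : AffConn ctx) (X Y Z : V) : A :=
  ctx.D X (ctx.g Y Z) - ctx.g (C.op X Y) Z - ctx.g Y (C.op X Z)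

/-- `(∇, g)` is a statistical structure: `∇` is torsion-free and `∇g` is symmetric. -/
def IsStatistical (ctx : StatContext A V) (C : AffConn ctx) : Prop :=
  IsTorsionFree ctx C ∧ ∀ X Y Z : V, nablaG ctx C X Y Z = nablaG ctx C Y X Z

/-- `∇*` is the dual connection of `∇` with respect to `g`:
`X g(Y,Z) = g(∇_X Y, Z) + g(Y, ∇*_X Z)`. -/
def IsDual (ctx : StatContext A V) (C Cs : AffConn ctx) : Prop :=
  ∀ X Y Z : V, ctx.D X (ctx.g Y Z) = ctx.g (C.op X Y) Z + ctx.g Y (Cs.op X Z)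
/-- A holomorphic statistical manifold: a Kaehler manifold `(N̄, g, J)` (with
Levi-Civita connection `LC`) together with a statistical structure `(∇, g)` with
dual connection `∇*` such that the Kaehler form `ω(X,Y) = g(X, JY)` is `∇`-parallel. -/
structure HolStatMan (ctx : StatContext A V) where
  C : AffConn ctx
  Cs : AffConn ctx
  J : V →ₗ[A] V
  statC : IsStatistical ctx C
  dual : IsDual ctx C Cs
  Jsq : ∀ X : V, J (J X) = -X
  Jiso : ∀ X Y : V, ctx.g (J X) (J Y) = ctx.g X Y
  LC : AffConn ctx
  LC_tf : IsTorsionFree ctx LC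
  LC_metric : ∀ X Y Z : V, ctx.D X (ctx.g Y Z) = ctx.g (LC.op X Y) Z + ctx.g Y (LC.op X Z)
  LC_J : ∀ X Y : V, LC.op X (J Y) = J (LC.op X Y)
  omega_par : ∀ X Y Z : V,
    ctx.D X (ctx.g Y (J Z)) = ctx.g (C.op X Y) (J Z) + ctx.g Y (J (C.op X Z))

/-- A statistical submanifold `N` of a holomorphic statistical manifold, encoded by the
submodule `T` of tangent vector fields, the submodule `Nor` of normal vector fields,
the induced dual connections `nab, nabS`, the imbedding curvature tensors (second
fundamental forms) `B, Bs`, the shape operators `Aop, AopS`, the normal connections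
`perp, perpS` (Gauss and Weingarten formulas), and the decompositions
`J X = P X + F X` (tangent `X`) and `J U = t' U + f' U` (normal `U`). -/
structure StatSub (ctx : StatContext A V) (M : HolStatMan ctx) where
  T : Submodule A V
  Nor : Submodule A V
  compl : IsCompl T Nor
  orth : ∀ X ∈ T, ∀ U ∈ Nor, ctx.g X U = 0
  bracket_mem : ∀ X ∈ T, ∀ Y ∈ T, ctx.bracket X Y ∈ T
  nab : V → V → V
  nabS : V → V → V
  B : V → V → V
  Bs : V → V → V
  Aop : V → V → V
  AopS : V → V → V
  perp : V → V → V
  perpS : V → V → V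
  nab_mem : ∀ X ∈ T, ∀ Y ∈ T, nab X Y ∈ T
  nabS_mem : ∀ X ∈ T, ∀ Y ∈ T, nabS X Y ∈ T
  B_mem : ∀ X ∈ T, ∀ Y ∈ T, B X Y ∈ Nor
  Bs_mem : ∀ X ∈ T, ∀ Y ∈ T, Bs X Y ∈ Nor
  B_symm : ∀ X ∈ T, ∀ Y ∈ T, B X Y = B Y X
  Bs_symm : ∀ X ∈ T, ∀ Y ∈ T, Bs X Y = Bs Y X
  A_mem : ∀ U ∈ Nor, ∀ X ∈ T, Aop U X ∈ T
  As_mem : ∀ U ∈ Nor, ∀ X ∈ T, AopS U X ∈ T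
  perp_mem : ∀ X ∈ T, ∀ U ∈ Nor, perp X U ∈ Nor
  perpS_mem : ∀ X ∈ T, ∀ U ∈ Nor, perpS X U ∈ Nor
  gauss : ∀ X ∈ T, ∀ Y ∈ T, M.C.op X Y = nab X Y + B X Y
  gaussS : ∀ X ∈ T, ∀ Y ∈ T, M.Cs.op X Y = nabS X Y + Bs X Y
  wein : ∀ X ∈ T, ∀ U ∈ Nor, M.C.op X U = - Aop U X + perp X U
  weinS : ∀ X ∈ T, ∀ U ∈ Nor, M.Cs.op X U = - AopS U X + perpS X U
  P : V → V
  F : V → V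
  t' : V → V
  f' : V → V
  PF_dec : ∀ X ∈ T, M.J X = P X + F X
  P_mem : ∀ X ∈ T, P X ∈ T
  F_mem : ∀ X ∈ T, F X ∈ Nor
  tf_dec : ∀ U ∈ Nor, M.J U = t' U + f' U
  t_mem : ∀ U ∈ Nor, t' U ∈ T
  f_mem : ∀ U ∈ Nor, f' U ∈ Nor

/-- A CR-statistical submanifold: the tangent bundle splits orthogonally as
`𝒟 ⊕ 𝒟⊥` with `𝒟` holomorphic (`J𝒟 = 𝒟`) and `𝒟⊥` totally real (`J𝒟⊥ ⊆ T⊥N`). -/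
structure CRSub (ctx : StatContext A V) (M : HolStatMan ctx) (S : StatSub ctx M) where
  Dd : Submodule A V
  Dp : Submodule A V
  Dd_le : Dd ≤ S.T
  Dp_le : Dp ≤ S.T
  orthD : ∀ X ∈ Dd, ∀ Z ∈ Dp, ctx.g X Z = 0
  spanD : Dd ⊔ Dp = S.T
  J_Dd : ∀ X ∈ Dd, M.J X ∈ Dd
  J_Dp : ∀ Z ∈ Dp, M.J Z ∈ S.Nor

section Aux
set_option linter.unusedSectionVars false

variable (ctx : StatContext A V) (M : HolStatMan ctx)

lemma AffConn.op_zero_right (C : AffConn ctx) (X : V) : C.op X 0 = 0 := by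
  have h := C.leibniz X 0 0
  simpa using h

lemma AffConn.op_neg_right (C : AffConn ctx) (X Z : V) : C.op X (-Z) = -C.op X Z := by
  have h := C.add_right X Z (-Z)
  rw [add_neg_cancel, C.op_zero_right] at h
  rw [eq_neg_iff_add_eq_zero, add_comm]
  exact h.symm

lemma g_J_skew (X Y : V) : ctx.g (M.J X) Y = - ctx.g X (M.J Y) := by
  have h := M.Jiso X (M.J Y)
  rw [M.Jsq] at h
  simp only [map_neg, LinearMap.neg_apply] at h
  linear_combination -h

lemma dual_swap (X Y Z : V) :
    ctx.D X (ctx.g Y Z) = ctx.g (M.Cs.op X Y) Z + ctx.g Y (M.C.op X Z) := by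
  have h := M.dual X Z Y
  rw [ctx.g_symm Z Y] at h
  rw [h, ctx.g_symm (M.C.op X Z) Y, ctx.g_symm Z (M.Cs.op X Y)]
  ring

lemma Cs_J (X Z : V) : M.Cs.op X (M.J Z) = M.J (M.C.op X Z) := by
  have key : ∀ Y, ctx.g (M.Cs.op X (M.J Z) - M.J (M.C.op X Z)) Y = 0 := by
    intro Y
    have h1 := M.dual X Y (M.J Z)
    have h2 := M.omega_par X Y Z
    have h3 : ctx.g Y (M.Cs.op X (M.J Z)) = ctx.g Y (M.J (M.C.op X Z)) := by
      linear_combination h2 - h1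
    rw [map_sub, LinearMap.sub_apply, ctx.g_symm (M.Cs.op X (M.J Z)) Y,
      ctx.g_symm (M.J (M.C.op X Z)) Y, h3, sub_self]
  have h0 := ctx.g_nondeg _ key
  exact sub_eq_zero.mp h0

lemma C_J (X Z : V) : M.C.op X (M.J Z) = M.J (M.Cs.op X Z) := by
  have h := Cs_J ctx M X (M.J Z)
  rw [M.Jsq, M.Cs.op_neg_right] at h
  have h2 := congrArg M.J h
  rw [map_neg, M.Jsq] at h2
  exact (neg_inj.mp h2).symm

variable (S : StatSub ctx M)

lemma gB_eq {X Y W : V} (hX : X ∈ S.T) (hY : Y ∈ S.T) (hW : W ∈ S.Nor) :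
    ctx.g (S.B X Y) W = ctx.g (S.AopS W X) Y := by
  have h := M.dual X Y W
  rw [S.orth Y hY W hW, map_zero, S.gauss X hX Y hY, S.weinS X hX W hW] at h
  simp only [map_add, map_neg, LinearMap.add_apply, LinearMap.neg_apply] at h
  have z1 : ctx.g (S.nabS X Y) W = 0 := S.orth _ (S.nabS_mem X hX Y hY) W hW
  have z1' : ctx.g (S.nab X Y) W = 0 := S.orth _ (S.nab_mem X hX Y hY) W hW
  have z2 : ctx.g Y (S.perpS X W) = 0 := S.orth Y hY _ (S.perpS_mem X hX W hW)
  have hs : ctx.g Y (S.AopS W X) = ctx.g (S.AopS W X) Y := ctx.g_symm _ _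
  linear_combination -h - z1' - z2 + hs

lemma gBs_eq {X Y W : V} (hX : X ∈ S.T) (hY : Y ∈ S.T) (hW : W ∈ S.Nor) :
    ctx.g (S.Bs X Y) W = ctx.g (S.Aop W X) Y := by
  have h := dual_swap ctx M X Y W
  rw [S.orth Y hY W hW, map_zero, S.gaussS X hX Y hY, S.wein X hX W hW] at h
  simp only [map_add, map_neg, LinearMap.add_apply, LinearMap.neg_apply] at h
  have z1 : ctx.g (S.nabS X Y) W = 0 := S.orth _ (S.nabS_mem X hX Y hY) W hW
  have z2 : ctx.g Y (S.perp X W) = 0 := S.orth Y hY _ (S.perp_mem X hX W hW)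
  have hs : ctx.g Y (S.Aop W X) = ctx.g (S.Aop W X) Y := ctx.g_symm _ _
  linear_combination -h - z1 - z2 + hs

lemma gP_skew {Z W : V} (hZ : Z ∈ S.T) (hW : W ∈ S.T) :
    ctx.g (S.P Z) W = - ctx.g Z (S.P W) := by
  have h := g_J_skew ctx M Z W
  rw [S.PF_dec Z hZ, S.PF_dec W hW] at h
  simp only [map_add, LinearMap.add_apply] at h
  have z1 : ctx.g (S.F Z) W = 0 := by
    rw [ctx.g_symm]; exact S.orth W hW _ (S.F_mem Z hZ)
  have z2 : ctx.g Z (S.F W) = 0 := S.orth Z hZ _ (S.F_mem W hW)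
  linear_combination h - z1 - z2

lemma gf_skew {U1 U2 : V} (hU1 : U1 ∈ S.Nor) (hU2 : U2 ∈ S.Nor) :
    ctx.g (S.f' U1) U2 = - ctx.g U1 (S.f' U2) := by
  have h := g_J_skew ctx M U1 U2
  rw [S.tf_dec U1 hU1, S.tf_dec U2 hU2] at h
  simp only [map_add, LinearMap.add_apply] at h
  have z1 : ctx.g (S.t' U1) U2 = 0 := S.orth _ (S.t_mem U1 hU1) U2 hU2
  have z2 : ctx.g U1 (S.t' U2) = 0 := by
    rw [ctx.g_symm]; exact S.orth _ (S.t_mem U2 hU2) U1 hU1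
  linear_combination h - z1 - z2

lemma key_pairing {X Y U : V} (hX : X ∈ S.T) (hY : Y ∈ S.T) (hU : U ∈ S.Nor) :
    ctx.g (S.perp X (S.F Y) - S.F (S.nabS X Y)) U
      + ctx.g (S.nab X (S.t' U) - S.t' (S.perpS X U)) Y = 0 := by
  have hPY := S.P_mem Y hY
  have hFY := S.F_mem Y hY
  have htU := S.t_mem U hU
  have hfU := S.f_mem U hU
  -- Equation 1 : g(C X (J Y)) U = g(J (Cs X Y)) U
  have e1 : ctx.g (M.C.op X (M.J Y)) U = ctx.g (M.J (M.Cs.op X Y)) U := by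
    rw [C_J]
  rw [S.PF_dec Y hY, M.C.add_right, S.gauss X hX _ hPY, S.wein X hX _ hFY,
    S.gaussS X hX Y hY] at e1
  rw [show M.J (S.nabS X Y + S.Bs X Y) = M.J (S.nabS X Y) + M.J (S.Bs X Y) from
      map_add _ _ _,
    S.PF_dec _ (S.nabS_mem X hX Y hY), S.tf_dec _ (S.Bs_mem X hX Y hY)] at e1
  simp only [map_add, map_neg, LinearMap.add_apply, LinearMap.neg_apply] at e1
  have z1 : ctx.g (S.nab X (S.P Y)) U = 0 := S.orth _ (S.nab_mem X hX _ hPY) U hU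
  have z2 : ctx.g (S.Aop (S.F Y) X) U = 0 := S.orth _ (S.A_mem _ hFY X hX) U hU
  have z3 : ctx.g (S.P (S.nabS X Y)) U = 0 :=
    S.orth _ (S.P_mem _ (S.nabS_mem X hX Y hY)) U hU
  have z4 : ctx.g (S.t' (S.Bs X Y)) U = 0 :=
    S.orth _ (S.t_mem _ (S.Bs_mem X hX Y hY)) U hU
  -- Equation 2 : g(C X (J U)) Y = g(J (Cs X U)) Y
  have e2 : ctx.g (M.C.op X (M.J U)) Y = ctx.g (M.J (M.Cs.op X U)) Y := by
    rw [C_J]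
  rw [S.tf_dec U hU, M.C.add_right, S.gauss X hX _ htU, S.wein X hX _ hfU,
    S.weinS X hX U hU] at e2
  rw [show M.J (-S.AopS U X + S.perpS X U) = -M.J (S.AopS U X) + M.J (S.perpS X U) from
      by rw [map_add, map_neg],
    S.PF_dec _ (S.As_mem U hU X hX), S.tf_dec _ (S.perpS_mem X hX U hU)] at e2
  simp only [map_add, map_neg, LinearMap.add_apply, LinearMap.neg_apply] at e2
  have w1 : ctx.g (S.B X (S.t' U)) Y = 0 := by
    rw [ctx.g_symm]; exact S.orth Y hY _ (S.B_mem X hX _ htU)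
  have w2 : ctx.g (S.perp X (S.f' U)) Y = 0 := by
    rw [ctx.g_symm]; exact S.orth Y hY _ (S.perp_mem X hX _ hfU)
  have w3 : ctx.g (S.F (S.AopS U X)) Y = 0 := by
    rw [ctx.g_symm]; exact S.orth Y hY _ (S.F_mem _ (S.As_mem U hU X hX))
  have w4 : ctx.g (S.f' (S.perpS X U)) Y = 0 := by
    rw [ctx.g_symm]; exact S.orth Y hY _ (S.f_mem _ (S.perpS_mem X hX U hU))
  -- Bridge 1 : g(B X (P Y)) U = - g(P (AopS U X)) Y
  have b1 : ctx.g (S.B X (S.P Y)) U = - ctx.g (S.P (S.AopS U X)) Y := by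
    rw [gB_eq ctx M S hX hPY hU, ctx.g_symm,
      gP_skew ctx M S hY (S.As_mem U hU X hX), ctx.g_symm Y]
  -- Bridge 2 : g(f' (Bs X Y)) U = - g(Aop (f' U) X) Y
  have b2 : ctx.g (S.f' (S.Bs X Y)) U = - ctx.g (S.Aop (S.f' U) X) Y := by
    rw [gf_skew ctx M S (S.Bs_mem X hX Y hY) hU, gBs_eq ctx M S hX hY hfU]
  simp only [map_sub, LinearMap.sub_apply]
  linear_combination e1 + e2 - b1 + b2 - z1 + z2 + z3 + z4 - w1 - w2 - w3 + w4

end Aux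

/-- `∇⊥_X (F Y) = F ∇*_X Y` for all tangent `X, Y` iff
`∇_X (tV) = t ∇⊥*_X V` for all tangent `X` and normal `V`. -/
theorem perp_F_commutes_iff_nab_t_commutes
    (ctx : StatContext A V) (M : HolStatMan ctx) (S : StatSub ctx M) :
    (∀ X ∈ S.T, ∀ Y ∈ S.T, S.perp X (S.F Y) = S.F (S.nabS X Y)) ↔
      (∀ X ∈ S.T, ∀ U ∈ S.Nor, S.nab X (S.t' U) = S.t' (S.perpS X U)) := by
  constructor
  · intro H X hX U hU
    have hd : ∀ W : V, ctx.g (S.nab X (S.t' U) - S.t' (S.perpS X U)) W = 0 := by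
      intro W
      have hW : W ∈ S.T ⊔ S.Nor := by rw [S.compl.sup_eq_top]; exact Submodule.mem_top
      rcases Submodule.mem_sup.mp hW with ⟨y, hy, z, hz, rfl⟩
      rw [map_add]
      have h1 : ctx.g (S.nab X (S.t' U) - S.t' (S.perpS X U)) y = 0 := by
        have hk := key_pairing ctx M S hX hy hU
        rw [H X hX y hy, sub_self, map_zero, LinearMap.zero_apply, zero_add] at hk
        exact hk
      have h2 : ctx.g (S.nab X (S.t' U) - S.t' (S.perpS X U)) z = 0 := by
        rw [map_sub, LinearMap.sub_apply,
          S.orth _ (S.nab_mem X hX _ (S.t_mem U hU)) z hz,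
          S.orth _ (S.t_mem _ (S.perpS_mem X hX U hU)) z hz, sub_self]
      rw [h1, h2, add_zero]
    exact sub_eq_zero.mp (ctx.g_nondeg _ hd)
  · intro H X hX Y hY
    have hd : ∀ W : V, ctx.g (S.perp X (S.F Y) - S.F (S.nabS X Y)) W = 0 := by
      intro W
      have hW : W ∈ S.T ⊔ S.Nor := by rw [S.compl.sup_eq_top]; exact Submodule.mem_top
      rcases Submodule.mem_sup.mp hW with ⟨y, hy, z, hz, rfl⟩
      rw [map_add]
      have h1 : ctx.g (S.perp X (S.F Y) - S.F (S.nabS X Y)) y = 0 := by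
        rw [map_sub, LinearMap.sub_apply, ctx.g_symm (S.perp X (S.F Y)) y,
          ctx.g_symm (S.F (S.nabS X Y)) y,
          S.orth y hy _ (S.perp_mem X hX _ (S.F_mem Y hY)),
          S.orth y hy _ (S.F_mem _ (S.nabS_mem X hX Y hY)), sub_self]
      have h2 : ctx.g (S.perp X (S.F Y) - S.F (S.nabS X Y)) z = 0 := by
        have hk := key_pairing ctx M S hX hY hz
        rw [H X hX z hz, sub_self, map_zero, LinearMap.zero_apply, add_zero] at hk
        exact hk
      rw [h1, h2, add_zero]
    exact sub_eq_zero.mp (ctx.g_nondeg _ hd)
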